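/- arXiv:1002.1295 — 2 statements merged into one kernel-verified Lean document; each statement's English description precedes it below -/
import Mathlib

section
/- Conserved quantities of the modulation system: let C, V, U : I → ℝ be differentiable on an interval I containing t₀, with C(t) > 0, satisfying C'(t) = ε·(4/(5-m))·(a'(ε·U(t))/a(ε·U(t)))·C(t)·V(t), V'(t) = ε·(8/(m+3))·(a'(ε·U(t))/a(ε·U(t)))·C(t), and U'(t) = V(t), with C(t₀) = c₀ > 0 and V(t₀) = v₀. Then for all t ∈ I: C(t) = c₀·( a(ε·U(t)) / a(ε·U(t₀)) )^(4/(5-m)) and V(t)² = v₀² + 4·λ₀·(C(t) - c₀), where λ₀ := (5-m)/(m+3). -/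
/-!
Both identities are first integrals of the system. With `g t = a (ε * U t)` one has
`g' = ε a'(ε U) V`, so the equation for `C` reads `C' = p (g' / g) C` with `p = 4 / (5 - m)`,
whence `C g ^ (-p)` is constant. Moreover `C'` and `V V'` are both multiples of
`ε (a'/a)(ε U) C V`, so a suitable combination `V ^ 2 - 4 λ₀ C` is constant.
-/

open Real

namespace Set.OrdConnected

variable {s : Set ℝ}

theorem apply_eq_of_hasDerivWithinAt_zero (hs : s.OrdConnected) {f : ℝ → ℝ}
    (hf : ∀ x ∈ s, HasDerivWithinAt f 0 s x) {x y : ℝ} (hx : x ∈ s) (hy : y ∈ s) :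
    f x = f y := by
  have h := (convex_iff_ordConnected.mpr hs).norm_image_sub_le_of_norm_hasDerivWithin_le
    (C := 0) hf (fun _ _ => norm_zero.le) hy hx
  rwa [zero_mul, norm_le_zero_iff, sub_eq_zero] at h

theorem eq_mul_div_rpow_of_hasDerivWithinAt (hs : s.OrdConnected) {f g g' : ℝ → ℝ} {p : ℝ}
    (hg : ∀ x ∈ s, HasDerivWithinAt g (g' x) s x) (hg_pos : ∀ x ∈ s, 0 < g x)
    (hf : ∀ x ∈ s, HasDerivWithinAt f (p * (g' x / g x) * f x) s x)
    {x₀ x : ℝ} (hx₀ : x₀ ∈ s) (hx : x ∈ s) :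
    f x = f x₀ * (g x / g x₀) ^ p := by
  have hconst : ∀ y ∈ s, HasDerivWithinAt (fun y => f y * g y ^ (-p)) 0 s y := by
    intro y hy
    have hgy := hg_pos y hy
    refine ((hf y hy).mul ((hg y hy).rpow_const (p := -p) (Or.inl hgy.ne'))).congr_deriv ?_
    rw [rpow_sub hgy, rpow_one]
    field_simp
    ring
  have hconserved := apply_eq_of_hasDerivWithinAt_zero hs hconst hx hx₀
  have hgx := hg_pos x hx
  have hgx₀ := hg_pos x₀ hx₀
  rw [rpow_neg hgx.le, rpow_neg hgx₀.le] at hconserved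
  rw [div_rpow hgx.le hgx₀.le]
  have := (rpow_pos_of_pos hgx p).ne'
  have := (rpow_pos_of_pos hgx₀ p).ne'
  field_simp at hconserved ⊢
  exact hconserved

theorem sq_sub_mul_eq_of_hasDerivWithinAt (hs : s.OrdConnected) {u v w : ℝ → ℝ} {α β : ℝ}
    (hα : α ≠ 0) (hu : ∀ x ∈ s, HasDerivWithinAt u (α * w x * v x) s x)
    (hv : ∀ x ∈ s, HasDerivWithinAt v (β * w x) s x) {x₀ x : ℝ} (hx₀ : x₀ ∈ s) (hx : x ∈ s) :
    v x ^ 2 - 2 * β / α * u x = v x₀ ^ 2 - 2 * β / α * u x₀ := by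
  refine apply_eq_of_hasDerivWithinAt_zero (f := fun y => v y ^ 2 - 2 * β / α * u y) hs
    (fun y hy => ?_) hx hx₀
  refine (((hv y hy).pow 2).sub ((hu y hy).const_mul (2 * β / α))).congr_deriv ?_
  field_simp
  ring

end Set.OrdConnected

theorem stmt11_general (m ε : ℝ) (hm5 : m < 5)
    (a : ℝ → ℝ) (ha : ContDiff ℝ 1 a) (hapos : ∀ r, 0 < a r)
    (I : Set ℝ) (hI : I.OrdConnected) (t₀ : ℝ) (ht₀ : t₀ ∈ I)
    (C V U : ℝ → ℝ) (c₀ v₀ : ℝ)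
    (hC : ∀ t ∈ I, HasDerivWithinAt C
        (ε * (4 / (5 - m)) * (deriv a (ε * U t) / a (ε * U t)) * C t * V t) I t)
    (hV : ∀ t ∈ I, HasDerivWithinAt V
        (ε * (8 / (m + 3)) * (deriv a (ε * U t) / a (ε * U t)) * C t) I t)
    (hU : ∀ t ∈ I, HasDerivWithinAt U (V t) I t)
    (hC0 : C t₀ = c₀) (hV0 : V t₀ = v₀) :
    ∀ t ∈ I, C t = c₀ * (a (ε * U t) / a (ε * U t₀)) ^ ((4:ℝ) / (5 - m)) ∧
      V t ^ 2 = v₀ ^ 2 + 4 * ((5 - m) / (m + 3)) * (C t - c₀) := by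
  intro t ht
  have hg : ∀ t ∈ I, HasDerivWithinAt (fun t => a (ε * U t))
      (deriv a (ε * U t) * (ε * V t)) I t := fun t ht =>
    (ha.differentiable one_ne_zero _).hasDerivAt.comp_hasDerivWithinAt t ((hU t ht).const_mul ε)
  have hp : (4 : ℝ) / (5 - m) ≠ 0 := div_ne_zero four_ne_zero (by linarith)
  have hcoef : 2 * (8 / (m + 3)) / (4 / (5 - m)) = 4 * ((5 - m) / (m + 3)) := by
    rw [div_div_eq_mul_div]
    ring
  constructor
  · rw [← hC0]
    refine hI.eq_mul_div_rpow_of_hasDerivWithinAt hg (fun _ _ => hapos _)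
      (fun t ht => (hC t ht).congr_deriv ?_) ht₀ ht
    ring
  · have energy := hI.sq_sub_mul_eq_of_hasDerivWithinAt hp (β := 8 / (m + 3))
      (w := fun t => ε * (deriv a (ε * U t) / a (ε * U t)) * C t)
      (fun t ht => (hC t ht).congr_deriv (by ring))
      (fun t ht => (hV t ht).congr_deriv (by ring)) ht₀ ht
    rw [hcoef, hC0, hV0] at energy
    linarith

theorem stmt11 (m ε : ℝ) (hm2 : 2 ≤ m) (hm5 : m < 5) (hε : 0 < ε)
    (a : ℝ → ℝ) (ha : ContDiff ℝ 1 a) (hapos : ∀ r, 0 < a r)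
    (I : Set ℝ) (hI : I.OrdConnected) (t₀ : ℝ) (ht₀ : t₀ ∈ I)
    (C V U : ℝ → ℝ) (c₀ v₀ : ℝ) (hc₀ : 0 < c₀)
    (hCpos : ∀ t ∈ I, 0 < C t)
    (hC : ∀ t ∈ I, HasDerivWithinAt C
        (ε * (4 / (5 - m)) * (deriv a (ε * U t) / a (ε * U t)) * C t * V t) I t)
    (hV : ∀ t ∈ I, HasDerivWithinAt V
        (ε * (8 / (m + 3)) * (deriv a (ε * U t) / a (ε * U t)) * C t) I t)
    (hU : ∀ t ∈ I, HasDerivWithinAt U (V t) I t)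
    (hC0 : C t₀ = c₀) (hV0 : V t₀ = v₀) :
    ∀ t ∈ I, C t = c₀ * (a (ε * U t) / a (ε * U t₀)) ^ ((4:ℝ) / (5 - m)) ∧
      V t ^ 2 = v₀ ^ 2 + 4 * ((5 - m) / (m + 3)) * (C t - c₀) :=
  stmt11_general m ε hm5 a ha hapos I hI t₀ ht₀ C V U c₀ v₀ hC hV hU hC0 hV0
end

section
/- Existence of approximated dynamical parameters (increasing potential): set T_ε := ε^(-1-1/100)/v₀. There exists a unique C¹ solution (V, C, U, H) on [-T_ε, ∞) of the system V' = ε·f₁(C,U), C' = ε·f₂(C,V,U), U' = V, H' = -(1/2)·V'·U with V(-T_ε) = v₀, C(-T_ε) = 1, U(-T_ε) = -v₀·T_ε, H(-T_ε) = 0, where f₁(C,U) := 8·a'(ε·U)·C/((m+3)·a(ε·U)) and f₂(C,V,U) := 4·a'(ε·U)·C·V/((5-m)·a(ε·U)). Moreover C and V are strictly increasing, and for all t ≥ -T_ε: 1 ≤ C(t) < 2^(4/(5-m)), v₀ ≤ V(t) < (v₀² + 4·λ₀·(2^(4/(5-m)) - 1))^(1/2), V(t)² = v₀² + 4·λ₀·(C(t)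 - 1), and C(t) = ( a(ε·U(t)) / a(-ε·v₀·T_ε) )^(4/(5-m)). -/
open Real Set

/-- `f₁(C,U) = 8 a'(εU) C / ((m+3) a(εU))`. -/
noncomputable def f₁ (m ε : ℝ) (a : ℝ → ℝ) (C U : ℝ) : ℝ :=
  8 * deriv a (ε * U) * C / ((m + 3) * a (ε * U))

/-- `f₂(C,V,U) = 4 a'(εU) C V / ((5-m) a(εU))`. -/
noncomputable def f₂ (m ε : ℝ) (a : ℝ → ℝ) (C V U : ℝ) : ℝ :=
  4 * deriv a (ε * U) * C * V / ((5 - m) * a (ε * U))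

/-- `(V, C, U, H)` is a C¹ solution on `[-Tε, ∞)` of the modulation system
`V' = ε f₁(C,U)`, `C' = ε f₂(C,V,U)`, `U' = V`, `H' = -(1/2) V' U`, with data
`V(-Tε) = v₀`, `C(-Tε) = 1`, `U(-Tε) = -v₀ Tε`, `H(-Tε) = 0`. -/
def IsModulationSol (m v₀ ε Tε : ℝ) (a : ℝ → ℝ) (V C U H : ℝ → ℝ) : Prop :=
  ContDiffOn ℝ 1 V (Ici (-Tε)) ∧ ContDiffOn ℝ 1 C (Ici (-Tε)) ∧
  ContDiffOn ℝ 1 U (Ici (-Tε)) ∧ ContDiffOn ℝ 1 H (Ici (-Tε)) ∧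
  (∀ t ∈ Ici (-Tε), HasDerivWithinAt V (ε * f₁ m ε a (C t) (U t)) (Ici (-Tε)) t) ∧
  (∀ t ∈ Ici (-Tε), HasDerivWithinAt C (ε * f₂ m ε a (C t) (V t) (U t)) (Ici (-Tε)) t) ∧
  (∀ t ∈ Ici (-Tε), HasDerivWithinAt U (V t) (Ici (-Tε)) t) ∧
  (∀ t ∈ Ici (-Tε), HasDerivWithinAt H (-(1/2) * (ε * f₁ m ε a (C t) (U t)) * U t)
      (Ici (-Tε)) t) ∧
  V (-Tε) = v₀ ∧ C (-Tε) = 1 ∧ U (-Tε) = -(v₀ * Tε) ∧ H (-Tε) = 0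

/-!
Along a solution two quantities are conserved, `C · a(εU)^(-4/(5-m))` and `V² - 4λ₀ C`, so `C` and
`V` are explicit functions of `U` (`cProfile`, `vProfile`), and `U` solves the autonomous scalar
equation `U' = vProfile U`. Since `v₀ ≤ vProfile` and `vProfile` is bounded, the time map
`u ↦ ∫_{u₀}^u ds / vProfile s` is an increasing bijection of `ℝ`; its inverse gives the solution,
and its injectivity gives uniqueness. Monotonicity and the bounds follow from `a' > 0`, `1 < a < 2`.
-/

open Filter in
theorem surjective_of_hasDerivAt_ge {Φ f : ℝ → ℝ} {c : ℝ} (hΦ : ∀ u, HasDerivAt Φ (f u) u)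
    (hc : 0 < c) (hfc : ∀ u, c ≤ f u) : Function.Surjective Φ := by
  have hψ : Monotone fun u => Φ u - c * u :=
    monotone_of_hasDerivAt_nonneg (fun u => (hΦ u).sub ((hasDerivAt_id u).const_mul c))
      fun u => by simpa using hfc u
  have hlin : Tendsto (fun u => c * u) atTop atTop := tendsto_id.const_mul_atTop hc
  have hlin' : Tendsto (fun u => c * u) atBot atBot := tendsto_id.const_mul_atBot hc
  refine Continuous.surjective (continuous_iff_continuousAt.2 fun u => (hΦ u).continuousAt) ?_ ?_
  · refine tendsto_atTop_mono' _ ((eventually_ge_atTop 0).mono fun u hu => ?_)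
      (tendsto_atTop_add_const_right _ (Φ 0) hlin)
    linarith [hψ hu]
  · refine tendsto_atBot_mono' _ ((eventually_le_atBot 0).mono fun u hu => ?_)
      (tendsto_atBot_add_const_right _ (Φ 0) hlin')
    linarith [hψ hu]

theorem contDiffOn_one_of_hasDerivWithinAt {𝕜 F : Type*} [NontriviallyNormedField 𝕜]
    [NormedAddCommGroup F] [NormedSpace 𝕜 F] {s : Set 𝕜} (hs : UniqueDiffOn 𝕜 s) {f φ : 𝕜 → F}
    (hf : ∀ t ∈ s, HasDerivWithinAt f (φ t) s t) (hφ : ContinuousOn φ s) :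
    ContDiffOn 𝕜 1 f s :=
  (contDiffOn_one_iff_derivWithin hs).2 ⟨fun t ht => (hf t ht).differentiableWithinAt,
    hφ.congr fun t ht => (hf t ht).derivWithin (hs t ht)⟩

theorem strictMonoOn_of_hasDerivWithinAt_pos' {D : Set ℝ} (hD : Convex ℝ D) {f φ : ℝ → ℝ}
    (hf : ∀ t ∈ D, HasDerivWithinAt f (φ t) D t) (hφ : ∀ t ∈ D, 0 < φ t) :
    StrictMonoOn f D :=
  strictMonoOn_of_hasDerivWithinAt_pos hD (fun t ht => (hf t ht).continuousWithinAt)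
    (fun t ht => (hf t (interior_subset ht)).mono interior_subset)
    (fun t ht => hφ t (interior_subset ht))

theorem eqOn_Ici_of_hasDerivWithinAt_eq {T : ℝ} {f g φ : ℝ → ℝ}
    (hf : ∀ t ∈ Ici T, HasDerivWithinAt f (φ t) (Ici T) t)
    (hg : ∀ t ∈ Ici T, HasDerivWithinAt g (φ t) (Ici T) t) (h₀ : f T = g T) :
    EqOn f g (Ici T) := fun t ht =>
  eq_of_has_deriv_right_eq (fun y hy => (hf y hy.1).mono (Ici_subset_Ici.2 hy.1))
    (fun y hy => (hg y hy.1).mono (Ici_subset_Ici.2 hy.1))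
    (fun y hy => (hf y hy.1).continuousWithinAt.mono Icc_subset_Ici_self)
    (fun y hy => (hg y hy.1).continuousWithinAt.mono Icc_subset_Ici_self) h₀ t ⟨ht, le_rfl⟩

section AutonomousODE

variable {F : ℝ → ℝ}

theorem hasDerivAt_integral_inv (hF : Continuous F) (hpos : ∀ u, 0 < F u) (u₀ u : ℝ) :
    HasDerivAt (fun u => ∫ s in u₀..u, (F s)⁻¹) (F u)⁻¹ u :=
  ((hF.inv₀ fun s => (hpos s).ne').integral_hasStrictDerivAt u₀ u).hasDerivAt

theorem exists_hasDerivAt_eq_comp (hF : Continuous F) (hpos : ∀ u, 0 < F u) {M : ℝ}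
    (hM : ∀ u, F u ≤ M) (t₀ u₀ : ℝ) :
    ∃ U : ℝ → ℝ, U t₀ = u₀ ∧ ∀ t, HasDerivAt U (F (U t)) t := by
  set Φ := fun u => ∫ s in u₀..u, (F s)⁻¹
  have hΦ := hasDerivAt_integral_inv hF hpos u₀
  have hmono : StrictMono Φ := strictMono_of_hasDerivAt_pos hΦ fun u => inv_pos.2 (hpos u)
  have hsurj : Function.Surjective Φ := surjective_of_hasDerivAt_ge hΦ
    (inv_pos.2 ((hpos 0).trans_le (hM 0))) fun u => inv_anti₀ (hpos u) (hM u)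
  set e := hmono.orderIsoOfSurjective Φ hsurj
  have hinv : ∀ y, HasDerivAt e.symm (F (e.symm y)) y := fun y => by
    simpa using (hΦ (e.symm y)).of_local_left_inverse e.symm.continuous.continuousAt
      (inv_ne_zero (hpos _).ne')
      (Filter.Eventually.of_forall (hmono.orderIsoOfSurjective_self_symm_apply Φ hsurj))
  refine ⟨fun t => e.symm (t - t₀), ?_, fun t => ?_⟩
  · simpa [Φ] using hmono.orderIsoOfSurjective_symm_apply_self Φ hsurj u₀
  · exact (hinv (t - t₀)).comp_sub_const t t₀

-- For `Φ u = ∫ 1 / F`, both `Φ ∘ U` and `Φ ∘ W` have derivative `1`, and `Φ` is injective.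
theorem eqOn_Ici_of_hasDerivWithinAt_eq_comp (hF : Continuous F) (hpos : ∀ u, 0 < F u)
    {U W : ℝ → ℝ} {t₀ : ℝ} (hU : ∀ t ∈ Ici t₀, HasDerivWithinAt U (F (U t)) (Ici t₀) t)
    (hW : ∀ t ∈ Ici t₀, HasDerivWithinAt W (F (W t)) (Ici t₀) t) (h₀ : U t₀ = W t₀) :
    EqOn U W (Ici t₀) := by
  set Φ := fun u => ∫ s in (0:ℝ)..u, (F s)⁻¹
  have hΦ := hasDerivAt_integral_inv hF hpos 0
  have hmono : StrictMono Φ := strictMono_of_hasDerivAt_pos hΦ fun u => inv_pos.2 (hpos u)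
  have hcomp : ∀ X : ℝ → ℝ, (∀ t ∈ Ici t₀, HasDerivWithinAt X (F (X t)) (Ici t₀) t) →
      ∀ t ∈ Ici t₀, HasDerivWithinAt (Φ ∘ X) 1 (Ici t₀) t := fun X hX t ht => by
    simpa [inv_mul_cancel₀ (hpos (X t)).ne'] using (hΦ (X t)).comp_hasDerivWithinAt t (hX t ht)
  intro t ht
  exact hmono.injective (eqOn_Ici_of_hasDerivWithinAt_eq (hcomp U hU) (hcomp W hW)
    (by simp only [Function.comp_apply, h₀]) ht)

end AutonomousODE

structure IsIncreasingPotential (a : ℝ → ℝ) : Prop where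
  contDiff : ContDiff ℝ 1 a
  one_lt : ∀ r, 1 < a r
  lt_two : ∀ r, a r < 2
  deriv_pos : ∀ r, 0 < deriv a r

namespace IsIncreasingPotential

variable {a : ℝ → ℝ} (ha : IsIncreasingPotential a)
include ha

theorem pos (r : ℝ) : 0 < a r := one_pos.trans (ha.one_lt r)

theorem differentiable : Differentiable ℝ a := ha.contDiff.differentiable one_ne_zero

theorem continuous : Continuous a := ha.differentiable.continuous

theorem continuous_deriv : Continuous (deriv a) := ha.contDiff.continuous_deriv le_rfl

theorem strictMono : StrictMono a := strictMono_of_deriv_pos ha.deriv_pos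

theorem continuous_f₁ {m ε : ℝ} (hm : -3 < m) {C U : ℝ → ℝ} (hC : Continuous C)
    (hU : Continuous U) : Continuous fun t => f₁ m ε a (C t) (U t) := by
  have := ha.continuous_deriv
  have := ha.continuous
  exact Continuous.div (by fun_prop) (by fun_prop)
    fun t => mul_ne_zero (by linarith) (ha.pos _).ne'

theorem continuous_f₂ {m ε : ℝ} (hm : m < 5) {C V U : ℝ → ℝ} (hC : Continuous C)
    (hV : Continuous V) (hU : Continuous U) : Continuous fun t => f₂ m ε a (C t) (V t) (U t) := by
  have := ha.continuous_deriv
  have := ha.continuous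
  exact Continuous.div (by fun_prop) (by fun_prop)
    fun t => mul_ne_zero (by linarith) (ha.pos _).ne'

end IsIncreasingPotential

noncomputable def cProfile (m ε u₀ : ℝ) (a : ℝ → ℝ) (u : ℝ) : ℝ :=
  (a (ε * u) / a (ε * u₀)) ^ ((4:ℝ) / (5 - m))

-- The truncation at `v₀` only matters for `u < u₀`; it makes the profile a positive continuous
-- function on all of `ℝ`.
noncomputable def vProfile (m v₀ ε u₀ : ℝ) (a : ℝ → ℝ) (u : ℝ) : ℝ :=
  max (√(v₀ ^ 2 + 4 * ((5 - m) / (m + 3)) * (cProfile m ε u₀ a u - 1))) v₀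

section Profiles

variable {m v₀ ε u₀ : ℝ} {a : ℝ → ℝ}

theorem cProfile_pos (ha : IsIncreasingPotential a) (u : ℝ) : 0 < cProfile m ε u₀ a u :=
  Real.rpow_pos_of_pos (div_pos (ha.pos _) (ha.pos _)) _

theorem cProfile_self (ha : IsIncreasingPotential a) : cProfile m ε u₀ a u₀ = 1 := by
  rw [cProfile, div_self (ha.pos _).ne', Real.one_rpow]

theorem one_le_cProfile (ha : IsIncreasingPotential a) (hm : m < 5) (hε : 0 ≤ ε) {u : ℝ}
    (hu : u₀ ≤ u) : 1 ≤ cProfile m ε u₀ a u :=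
  Real.one_le_rpow ((one_le_div (ha.pos _)).2 (ha.strictMono.monotone
    (mul_le_mul_of_nonneg_left hu hε))) (div_pos four_pos (by linarith)).le

theorem cProfile_lt (ha : IsIncreasingPotential a) (hm : m < 5) (u : ℝ) :
    cProfile m ε u₀ a u < 2 ^ ((4:ℝ) / (5 - m)) := by
  refine Real.rpow_lt_rpow (div_pos (ha.pos _) (ha.pos _)).le ?_ (div_pos four_pos (by linarith))
  rw [div_lt_iff₀ (ha.pos _)]
  linarith [ha.lt_two (ε * u), ha.one_lt (ε * u₀)]

theorem continuous_cProfile (ha : IsIncreasingPotential a) : Continuous (cProfile m ε u₀ a) :=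
  (ha.continuous.comp (continuous_const.mul continuous_id)).div_const _ |>.rpow_const
    fun _ => Or.inl (div_pos (ha.pos _) (ha.pos _)).ne'

theorem hasDerivAt_cProfile (ha : IsIncreasingPotential a) (u : ℝ) :
    HasDerivAt (cProfile m ε u₀ a)
      (4 / (5 - m) * (ε * deriv a (ε * u) / a (ε * u)) * cProfile m ε u₀ a u) u := by
  have hbase : HasDerivAt (fun u => a (ε * u) / a (ε * u₀)) (deriv a (ε * u) * ε / a (ε * u₀)) u :=
    ((ha.differentiable _).hasDerivAt.comp u ((hasDerivAt_id u).const_mul ε |>.congr_deriv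
      (mul_one ε))).div_const _
  have hpos : 0 < a (ε * u) / a (ε * u₀) := div_pos (ha.pos _) (ha.pos _)
  refine ((Real.hasDerivAt_rpow_const (Or.inl hpos.ne')).comp u hbase).congr_deriv ?_
  rw [cProfile, Real.rpow_sub_one hpos.ne']
  field_simp [(ha.pos (ε * u)).ne', (ha.pos (ε * u₀)).ne']

theorem hasDerivWithinAt_cProfile_comp (ha : IsIncreasingPotential a) (hm : m < 5)
    {U : ℝ → ℝ} {v t : ℝ} {s : Set ℝ} (hU : HasDerivWithinAt U v s t) :
    HasDerivWithinAt (fun t => cProfile m ε u₀ a (U t))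
      (ε * f₂ m ε a (cProfile m ε u₀ a (U t)) v (U t)) s t := by
  refine ((hasDerivAt_cProfile ha (U t)).comp_hasDerivWithinAt t hU).congr_deriv ?_
  rw [f₂]
  field_simp [(ha.pos (ε * U t)).ne', (by linarith : (5:ℝ) - m ≠ 0)]

theorem continuous_vProfile (ha : IsIncreasingPotential a) : Continuous (vProfile m v₀ ε u₀ a) :=
  ((continuous_const.add (continuous_const.mul
    ((continuous_cProfile ha).sub continuous_const))).sqrt).max continuous_const

theorem vProfile_le (ha : IsIncreasingPotential a) (hm₃ : -3 < m) (hm₅ : m < 5) (u : ℝ) :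
    vProfile m v₀ ε u₀ a u ≤ √(v₀ ^ 2 + 4 * ((5 - m) / (m + 3)) * (2 ^ ((4:ℝ) / (5 - m)) - 1)) := by
  have hlam : 0 < (5 - m) / (m + 3) := div_pos (by linarith) (by linarith)
  have hc := cProfile_lt (ε := ε) (u₀ := u₀) ha hm₅ u
  have hc₀ := cProfile_pos (m := m) (ε := ε) (u₀ := u₀) ha u
  have h2 : (1:ℝ) ≤ 2 ^ ((4:ℝ) / (5 - m)) := Real.one_le_rpow one_le_two (by positivity)
  refine max_le (Real.sqrt_le_sqrt (by nlinarith)) ((le_abs_self v₀).trans (Real.abs_le_sqrt ?_))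
  nlinarith

theorem vProfile_eq_sqrt (ha : IsIncreasingPotential a) (hm₃ : -3 < m) (hm₅ : m < 5) (hε : 0 ≤ ε)
    {u : ℝ} (hu : u₀ ≤ u) :
    vProfile m v₀ ε u₀ a u = √(v₀ ^ 2 + 4 * ((5 - m) / (m + 3)) * (cProfile m ε u₀ a u - 1)) := by
  have hlam : 0 < (5 - m) / (m + 3) := div_pos (by linarith) (by linarith)
  have hc := one_le_cProfile ha hm₅ hε hu
  exact max_eq_left ((le_abs_self v₀).trans (Real.abs_le_sqrt (by nlinarith)))

theorem hasDerivWithinAt_vProfile (ha : IsIncreasingPotential a) (hm₃ : -3 < m) (hm₅ : m < 5)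
    (hε : 0 ≤ ε) (hv₀ : 0 < v₀) {u : ℝ} (hu : u₀ ≤ u) :
    HasDerivWithinAt (vProfile m v₀ ε u₀ a)
      (ε * f₁ m ε a (cProfile m ε u₀ a u) u / vProfile m v₀ ε u₀ a u) (Ici u₀) u := by
  have hlam : 0 < (5 - m) / (m + 3) := div_pos (by linarith) (by linarith)
  have hc := one_le_cProfile ha hm₅ hε hu
  have harg : 0 < v₀ ^ 2 + 4 * ((5 - m) / (m + 3)) * (cProfile m ε u₀ a u - 1) := by
    nlinarith
  have hsqrt := ((((hasDerivAt_cProfile ha u).sub_const 1).const_mul (4 * ((5 - m) / (m + 3)))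
    |>.const_add (v₀ ^ 2)).sqrt harg.ne').hasDerivWithinAt (s := Ici u₀)
  refine (hsqrt.congr (fun y hy => vProfile_eq_sqrt ha hm₃ hm₅ hε hy)
    (vProfile_eq_sqrt ha hm₃ hm₅ hε hu)).congr_deriv ?_
  rw [vProfile_eq_sqrt ha hm₃ hm₅ hε hu, f₁]
  field_simp [(ha.pos (ε * u)).ne', (Real.sqrt_pos.2 harg).ne', (by linarith : (5:ℝ) - m ≠ 0),
    (by linarith : m + 3 ≠ 0)]
  ring

end Profiles

namespace IsModulationSol

variable {m v₀ ε Tε : ℝ} {a : ℝ → ℝ} {V C U H : ℝ → ℝ}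

theorem c_eq_cProfile (hs : IsModulationSol m v₀ ε Tε a V C U H) (ha : IsIncreasingPotential a)
    (hm : m < 5) : ∀ t ∈ Ici (-Tε), C t = cProfile m ε (-(v₀ * Tε)) a (U t) := by
  obtain ⟨-, -, -, -, -, hC, hU, -, -, hC₀, hU₀, -⟩ := hs
  have hratio : ∀ t ∈ Ici (-Tε), HasDerivWithinAt
      (fun t => C t / cProfile m ε (-(v₀ * Tε)) a (U t)) 0 (Ici (-Tε)) t := fun t ht => by
    refine ((hC t ht).div (hasDerivWithinAt_cProfile_comp ha hm (hU t ht))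
      (cProfile_pos ha _).ne').congr_deriv ?_
    rw [div_eq_zero_iff, f₂, f₂]
    left
    ring
  intro t ht
  have := eqOn_Ici_of_hasDerivWithinAt_eq hratio (fun t _ => hasDerivWithinAt_const t _ 1)
    (by simp only [hC₀, hU₀, cProfile_self ha, div_one]) ht
  exact (div_eq_one_iff_eq (cProfile_pos ha _).ne').1 this

theorem sq_v_eq (hs : IsModulationSol m v₀ ε Tε a V C U H) (ha : IsIncreasingPotential a)
    (hm₃ : -3 < m) (hm₅ : m < 5) :
    ∀ t ∈ Ici (-Tε), V t ^ 2 = v₀ ^ 2 + 4 * ((5 - m) / (m + 3)) * (C t - 1) := by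
  obtain ⟨-, -, -, -, hV, hC, -, -, hV₀, hC₀, -, -⟩ := hs
  have hconserved : ∀ t ∈ Ici (-Tε), HasDerivWithinAt
      (fun t => V t ^ 2 - 4 * ((5 - m) / (m + 3)) * C t) 0 (Ici (-Tε)) t := fun t ht => by
    refine (((hV t ht).pow 2).sub ((hC t ht).const_mul _)).congr_deriv ?_
    simp only [f₁, f₂]
    field_simp [(ha.pos (ε * U t)).ne', (by linarith : (5:ℝ) - m ≠ 0), (by linarith : m + 3 ≠ 0)]
    ring
  intro t ht
  have := eqOn_Ici_of_hasDerivWithinAt_eq hconserved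
    (fun t _ => hasDerivWithinAt_const t _ (v₀ ^ 2 - 4 * ((5 - m) / (m + 3))))
    (by simp only [hV₀, hC₀, mul_one]) ht
  simp only at this
  linarith

theorem strictMonoOn_v (hs : IsModulationSol m v₀ ε Tε a V C U H) (ha : IsIncreasingPotential a)
    (hm₃ : -3 < m) (hm₅ : m < 5) (hε : 0 < ε) : StrictMonoOn V (Ici (-Tε)) := by
  have hC := hs.c_eq_cProfile ha hm₅
  obtain ⟨-, -, -, -, hV, -⟩ := hs
  refine strictMonoOn_of_hasDerivWithinAt_pos' (convex_Ici _) hV fun t ht => ?_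
  rw [hC t ht]
  exact mul_pos hε (div_pos (mul_pos (mul_pos (by norm_num) (ha.deriv_pos _)) (cProfile_pos ha _))
    (mul_pos (by linarith) (ha.pos _)))

theorem le_v (hs : IsModulationSol m v₀ ε Tε a V C U H) (ha : IsIncreasingPotential a)
    (hm₃ : -3 < m) (hm₅ : m < 5) (hε : 0 < ε) : ∀ t ∈ Ici (-Tε), v₀ ≤ V t := by
  have hmono := hs.strictMonoOn_v ha hm₃ hm₅ hε
  obtain ⟨-, -, -, -, -, -, -, -, hV₀, -⟩ := hs
  exact fun _ ht => hV₀ ▸ hmono.monotoneOn self_mem_Ici ht ht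

theorem strictMonoOn_c (hs : IsModulationSol m v₀ ε Tε a V C U H) (ha : IsIncreasingPotential a)
    (hm₃ : -3 < m) (hm₅ : m < 5) (hε : 0 < ε) (hv₀ : 0 < v₀) : StrictMonoOn C (Ici (-Tε)) := by
  have hC := hs.c_eq_cProfile ha hm₅
  have hle := hs.le_v ha hm₃ hm₅ hε
  obtain ⟨-, -, -, -, -, hCd, -⟩ := hs
  refine strictMonoOn_of_hasDerivWithinAt_pos' (convex_Ici _) hCd fun t ht => ?_
  rw [hC t ht]
  exact mul_pos hε (div_pos (mul_pos (mul_pos (mul_pos (by norm_num) (ha.deriv_pos _))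
    (cProfile_pos ha _)) (hv₀.trans_le (hle t ht)))
    (mul_pos (by linarith) (ha.pos _)))

theorem one_le_c (hs : IsModulationSol m v₀ ε Tε a V C U H) (ha : IsIncreasingPotential a)
    (hm₃ : -3 < m) (hm₅ : m < 5) (hε : 0 < ε) (hv₀ : 0 < v₀) : ∀ t ∈ Ici (-Tε), 1 ≤ C t := by
  have hmono := hs.strictMonoOn_c ha hm₃ hm₅ hε hv₀
  obtain ⟨-, -, -, -, -, -, -, -, -, hC₀, -⟩ := hs
  exact fun _ ht => hC₀ ▸ hmono.monotoneOn self_mem_Ici ht ht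

theorem c_lt (hs : IsModulationSol m v₀ ε Tε a V C U H) (ha : IsIncreasingPotential a)
    (hm : m < 5) : ∀ t ∈ Ici (-Tε), C t < 2 ^ ((4:ℝ) / (5 - m)) := fun t ht =>
  hs.c_eq_cProfile ha hm t ht ▸ cProfile_lt ha hm _

theorem v_lt (hs : IsModulationSol m v₀ ε Tε a V C U H) (ha : IsIncreasingPotential a)
    (hm₃ : -3 < m) (hm₅ : m < 5) (hε : 0 < ε) (hv₀ : 0 ≤ v₀) : ∀ t ∈ Ici (-Tε),
    V t < √(v₀ ^ 2 + 4 * ((5 - m) / (m + 3)) * (2 ^ ((4:ℝ) / (5 - m)) - 1)) := fun t ht => by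
  have hlam : 0 < (5 - m) / (m + 3) := div_pos (by linarith) (by linarith)
  rw [Real.lt_sqrt (hv₀.trans (hs.le_v ha hm₃ hm₅ hε t ht)), hs.sq_v_eq ha hm₃ hm₅ t ht]
  nlinarith [hs.c_lt ha hm₅ t ht]

theorem v_eq_vProfile (hs : IsModulationSol m v₀ ε Tε a V C U H) (ha : IsIncreasingPotential a)
    (hm₃ : -3 < m) (hm₅ : m < 5) (hε : 0 < ε) (hv₀ : 0 ≤ v₀) :
    ∀ t ∈ Ici (-Tε), V t = vProfile m v₀ ε (-(v₀ * Tε)) a (U t) := fun t ht => by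
  have hle := hs.le_v ha hm₃ hm₅ hε t ht
  rw [vProfile, ← hs.c_eq_cProfile ha hm₅ t ht, ← hs.sq_v_eq ha hm₃ hm₅ t ht,
    Real.sqrt_sq (hv₀.trans hle), max_eq_left hle]

theorem unique (hs : IsModulationSol m v₀ ε Tε a V C U H) {V' C' U' H' : ℝ → ℝ}
    (hs' : IsModulationSol m v₀ ε Tε a V' C' U' H') (ha : IsIncreasingPotential a)
    (hm₃ : -3 < m) (hm₅ : m < 5) (hε : 0 < ε) (hv₀ : 0 < v₀) :
    EqOn V V' (Ici (-Tε)) ∧ EqOn C C' (Ici (-Tε)) ∧ EqOn U U' (Ici (-Tε)) ∧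
      EqOn H H' (Ici (-Tε)) := by
  have hV := hs.v_eq_vProfile ha hm₃ hm₅ hε hv₀.le
  have hV' := hs'.v_eq_vProfile ha hm₃ hm₅ hε hv₀.le
  have hC := hs.c_eq_cProfile ha hm₅
  have hC' := hs'.c_eq_cProfile ha hm₅
  obtain ⟨-, -, -, -, -, -, hUd, hHd, -, -, hU₀, hH₀⟩ := hs
  obtain ⟨-, -, -, -, -, -, hUd', hHd', -, -, hU₀', hH₀'⟩ := hs'
  have hU : EqOn U U' (Ici (-Tε)) := eqOn_Ici_of_hasDerivWithinAt_eq_comp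
    (continuous_vProfile ha) (fun _ => hv₀.trans_le (le_max_right _ _))
    (fun t ht => hV t ht ▸ hUd t ht) (fun t ht => hV' t ht ▸ hUd' t ht) (hU₀.trans hU₀'.symm)
  have hCC' : EqOn C C' (Ici (-Tε)) := fun t ht => by rw [hC t ht, hC' t ht, hU ht]
  refine ⟨fun t ht => by rw [hV t ht, hV' t ht, hU ht], hCC', hU, ?_⟩
  exact eqOn_Ici_of_hasDerivWithinAt_eq hHd (fun t ht => by rw [hCC' ht, hU ht]; exact hHd' t ht)
    (hH₀.trans hH₀'.symm)

end IsModulationSol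

theorem exists_isModulationSol {m v₀ ε : ℝ} {a : ℝ → ℝ} (ha : IsIncreasingPotential a)
    (hm₃ : -3 < m) (hm₅ : m < 5) (hε : 0 < ε) (hv₀ : 0 < v₀) (Tε : ℝ) :
    ∃ V C U H : ℝ → ℝ, IsModulationSol m v₀ ε Tε a V C U H := by
  set u₀ := -(v₀ * Tε)
  set F := vProfile m v₀ ε u₀ a
  have hFpos : ∀ u, 0 < F u := fun _ => hv₀.trans_le (le_max_right _ _)
  obtain ⟨U, hU₀, hU⟩ := exists_hasDerivAt_eq_comp (continuous_vProfile ha) hFpos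
    (vProfile_le ha hm₃ hm₅) (-Tε) u₀
  have hUcont : Continuous U := continuous_iff_continuousAt.2 fun t => (hU t).continuousAt
  have hUge : ∀ t ∈ Ici (-Tε), u₀ ≤ U t := fun _ ht =>
    hU₀ ▸ (strictMono_of_hasDerivAt_pos hU fun _ => hFpos _).monotone ht
  set C := fun t => cProfile m ε u₀ a (U t)
  set V := fun t => F (U t)
  have hCcont : Continuous C := (continuous_cProfile ha).comp hUcont
  have hVcont : Continuous V := (continuous_vProfile ha).comp hUcont
  set φ := fun t => -(1 / 2) * (ε * f₁ m ε a (C t) (U t)) * U t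
  have hf₁ : Continuous fun t => ε * f₁ m ε a (C t) (U t) :=
    continuous_const.mul (ha.continuous_f₁ hm₃ hCcont hUcont)
  have hf₂ : Continuous fun t => ε * f₂ m ε a (C t) (V t) (U t) :=
    continuous_const.mul (ha.continuous_f₂ hm₅ hCcont hVcont hUcont)
  have hVd : ∀ t ∈ Ici (-Tε), HasDerivWithinAt V (ε * f₁ m ε a (C t) (U t)) (Ici (-Tε)) t :=
    fun t ht => ((hasDerivWithinAt_vProfile ha hm₃ hm₅ hε.le hv₀ (hUge t ht)).comp t
      (hU t).hasDerivWithinAt hUge).congr_deriv (div_mul_cancel₀ _ (hFpos _).ne')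
  have hCd : ∀ t ∈ Ici (-Tε), HasDerivWithinAt C (ε * f₂ m ε a (C t) (V t) (U t)) (Ici (-Tε)) t :=
    fun t _ => hasDerivWithinAt_cProfile_comp ha hm₅ (hU t).hasDerivWithinAt
  have hφ : Continuous φ := (continuous_const.mul hf₁).mul hUcont
  have hHd : ∀ t, HasDerivAt (fun t => ∫ s in (-Tε)..t, φ s) (φ t) t := fun t =>
    (hφ.integral_hasStrictDerivAt _ t).hasDerivAt
  have hV₀ : V (-Tε) = v₀ := by
    simp only [V, F, hU₀, vProfile_eq_sqrt ha hm₃ hm₅ hε.le le_rfl, cProfile_self ha, sub_self,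
      mul_zero, add_zero, Real.sqrt_sq hv₀.le]
  refine ⟨V, C, U, fun t => ∫ s in (-Tε)..t, φ s,
    contDiffOn_one_of_hasDerivWithinAt (uniqueDiffOn_Ici _) hVd hf₁.continuousOn,
    contDiffOn_one_of_hasDerivWithinAt (uniqueDiffOn_Ici _) hCd hf₂.continuousOn,
    contDiffOn_one_of_hasDerivWithinAt (uniqueDiffOn_Ici _) (fun t _ => (hU t).hasDerivWithinAt)
      hVcont.continuousOn,
    contDiffOn_one_of_hasDerivWithinAt (uniqueDiffOn_Ici _) (fun t _ => (hHd t).hasDerivWithinAt)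
      hφ.continuousOn,
    hVd, hCd, fun t _ => (hU t).hasDerivWithinAt,
    fun t _ => (hHd t).hasDerivWithinAt, hV₀, by simp only [C, hU₀, cProfile_self ha], hU₀,
    intervalIntegral.integral_same⟩

theorem stmt12_general (m v₀ ε : ℝ) (hm2 : 2 ≤ m) (hm5 : m < 5) (hv₀ : 0 < v₀) (hε : 0 < ε)
    (a : ℝ → ℝ) (ha : ContDiff ℝ 1 a)
    (ha1 : ∀ r, 1 < a r) (ha2 : ∀ r, a r < 2) (ha' : ∀ r, 0 < deriv a r)
    (Tε lam0 : ℝ) (hlam0 : lam0 = (5 - m) / (m + 3)) :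
    ∃ V C U H : ℝ → ℝ,
      IsModulationSol m v₀ ε Tε a V C U H ∧
      StrictMonoOn C (Ici (-Tε)) ∧ StrictMonoOn V (Ici (-Tε)) ∧
      (∀ t ∈ Ici (-Tε),
        1 ≤ C t ∧ C t < (2:ℝ) ^ ((4:ℝ) / (5 - m)) ∧
        v₀ ≤ V t ∧ V t < Real.sqrt (v₀ ^ 2 + 4 * lam0 * ((2:ℝ) ^ ((4:ℝ) / (5 - m)) - 1)) ∧
        V t ^ 2 = v₀ ^ 2 + 4 * lam0 * (C t - 1) ∧
        C t = (a (ε * U t) / a (-(ε * v₀ * Tε))) ^ ((4:ℝ) / (5 - m))) ∧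
      (∀ V' C' U' H' : ℝ → ℝ, IsModulationSol m v₀ ε Tε a V' C' U' H' →
        EqOn V V' (Ici (-Tε)) ∧ EqOn C C' (Ici (-Tε)) ∧
        EqOn U U' (Ici (-Tε)) ∧ EqOn H H' (Ici (-Tε))) := by
  subst hlam0
  have hpot : IsIncreasingPotential a := ⟨ha, ha1, ha2, ha'⟩
  have hm3 : -3 < m := by linarith
  obtain ⟨V, C, U, H, hs⟩ := exists_isModulationSol hpot hm3 hm5 hε hv₀ Tε
  refine ⟨V, C, U, H, hs, hs.strictMonoOn_c hpot hm3 hm5 hε hv₀,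
    hs.strictMonoOn_v hpot hm3 hm5 hε, fun t ht => ⟨hs.one_le_c hpot hm3 hm5 hε hv₀ t ht,
      hs.c_lt hpot hm5 t ht, hs.le_v hpot hm3 hm5 hε t ht, hs.v_lt hpot hm3 hm5 hε hv₀.le t ht,
      hs.sq_v_eq hpot hm3 hm5 t ht, ?_⟩,
    fun V' C' U' H' hs' => hs.unique hs' hpot hm3 hm5 hε hv₀⟩
  rw [hs.c_eq_cProfile hpot hm5 t ht, cProfile, mul_neg, ← mul_assoc]

theorem stmt12 (m v₀ ε : ℝ) (hm2 : 2 ≤ m) (hm5 : m < 5) (hv₀ : 0 < v₀) (hε : 0 < ε)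
    (a : ℝ → ℝ) (ha : ContDiff ℝ 1 a)
    (ha1 : ∀ r, 1 < a r) (ha2 : ∀ r, a r < 2) (ha' : ∀ r, 0 < deriv a r)
    (hdecay : ∃ K > (0:ℝ), ∃ μ > (0:ℝ),
      (∀ r, |deriv a r| ≤ K * Real.exp (-μ * |r|)) ∧
      (∀ r ≤ (0:ℝ), a r - 1 ≤ K * Real.exp (μ * r)) ∧
      (∀ r ≥ (0:ℝ), 2 - a r ≤ K * Real.exp (-μ * r)))
    (Tε lam0 : ℝ) (hTε : Tε = ε ^ (-(1:ℝ) - 1/100) / v₀) (hlam0 : lam0 = (5 - m) / (m + 3)) :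
    ∃ V C U H : ℝ → ℝ,
      IsModulationSol m v₀ ε Tε a V C U H ∧
      StrictMonoOn C (Ici (-Tε)) ∧ StrictMonoOn V (Ici (-Tε)) ∧
      (∀ t ∈ Ici (-Tε),
        1 ≤ C t ∧ C t < (2:ℝ) ^ ((4:ℝ) / (5 - m)) ∧
        v₀ ≤ V t ∧ V t < Real.sqrt (v₀ ^ 2 + 4 * lam0 * ((2:ℝ) ^ ((4:ℝ) / (5 - m)) - 1)) ∧
        V t ^ 2 = v₀ ^ 2 + 4 * lam0 * (C t - 1) ∧
        C t = (a (ε * U t) / a (-(ε * v₀ * Tε))) ^ ((4:ℝ) / (5 - m))) ∧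
      (∀ V' C' U' H' : ℝ → ℝ, IsModulationSol m v₀ ε Tε a V' C' U' H' →
        EqOn V V' (Ici (-Tε)) ∧ EqOn C C' (Ici (-Tε)) ∧
        EqOn U U' (Ici (-Tε)) ∧ EqOn H H' (Ici (-Tε))) :=
  stmt12_general m v₀ ε hm2 hm5 hv₀ hε a ha ha1 ha2 ha' Tε lam0 hlam0
end
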